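/- arXiv:2601.18789 — 2 statements merged into one kernel-verified Lean document; each statement's English description precedes it below -/
import Mathlib

section
/- Let k, r ≥ 2 and let s_1, …, s_k be distinct unit vectors in R^d. Then there exists a constant η > 0, depending only on {s_1,…,s_k} and r, such that for every nonzero w ∈ R^d and every θ ∈ (0, π/2), writing U for the linear span of {g(x) : x ∈ W_θ} and π_U for the orthogonal projection of R^d onto U, one has ‖π_U(w)‖ ≤ η ‖w‖ sin θ. (Equivalently, the angle φ between w and the orthogonal complement U^⊥ of U satisfies sin φ ≤ η sin θ.) -/
attribute [local instance] Classical.propDecidable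

open scoped RealInnerProductSpace

/-- The defining condition of the space `X` of swaps: `x ∈ ℤ^k` with all `|x i| ≤ 2r-2`,
`∑ x i = 0` and `∑ |x i| ≤ 4r-4`. -/
def SwapCond (k r : ℕ) (x : Fin k → ℤ) : Prop :=
  (∀ i, |x i| ≤ 2 * (r : ℤ) - 2) ∧ (∑ i, x i = 0) ∧ (∑ i, |x i| ≤ 4 * (r : ℤ) - 4)

/-- `g x = ∑ i, x i • s i`. -/
noncomputable def gMap {k d : ℕ} (s : Fin k → EuclideanSpace ℝ (Fin d))
    (x : Fin k → ℤ) : EuclideanSpace ℝ (Fin d) :=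
  ∑ i, (x i : ℝ) • s i

/-- The sine of the angle `θ(x)` between `g x` and the hyperplane `w^⊥`
(`0` by convention when `g x = 0`, matching division-by-zero conventions). -/
noncomputable def sinAngle {k d : ℕ} (s : Fin k → EuclideanSpace ℝ (Fin d))
    (w : EuclideanSpace ℝ (Fin d)) (x : Fin k → ℤ) : ℝ :=
  |⟪gMap s x, w⟫| / (‖gMap s x‖ * ‖w‖)

/-- The constant `β₀ = L / min {‖g x‖ : x ∈ X, g x ≠ 0}`, with `L = 8(r-1)²`. -/
noncomputable def beta0 (k r : ℕ) {d : ℕ} (s : Fin k → EuclideanSpace ℝ (Fin d)) : ℝ :=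
  8 * ((r : ℝ) - 1) ^ 2 /
    sInf {t : ℝ | ∃ x, SwapCond k r x ∧ gMap s x ≠ 0 ∧ t = ‖gMap s x‖}

/-! Only finitely many vectors `g x` exist, so only finitely many subspaces `U` can occur and one
constant per subspace suffices. For `U = span T` the projection of `w` is bounded linearly by the
inner products `⟪v, w⟫` with `v ∈ T`, and for `v = g x` with `x ∈ W_θ` these are at most
`sin θ ‖v‖ ‖w‖`. -/

namespace Submodule

variable {E : Type*} [NormedAddCommGroup E] [InnerProductSpace ℝ E]

/- `span S` embeds into `S → ℝ` by `u ↦ (⟪v, u⟫)_{v ∈ S}`; this injective linear map on a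
finite-dimensional space is antilipschitz, and it sends the projection of `w` to `(⟪v, w⟫)_v`. -/
theorem exists_norm_orthogonalProjectionOnto_span_le (S : Finset E) :
    ∃ C : ℝ, ∀ (w : E) (δ : ℝ), 0 ≤ δ → (∀ v ∈ S, |⟪v, w⟫| ≤ δ) →
      ‖(span ℝ (S : Set E)).orthogonalProjectionOnto w‖ ≤ C * δ := by
  set K := span ℝ (S : Set E)
  let f : K →ₗ[ℝ] S → ℝ := LinearMap.pi fun v : S => (innerₛₗ ℝ (v : E)).comp K.subtype
  have hf : ∀ u v, f u v = ⟪(v : E), u⟫ := fun _ _ => rfl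
  have hker : LinearMap.ker f = ⊥ := by
    refine LinearMap.ker_eq_bot'.2 fun u hu => ?_
    have hKu : K ≤ (ℝ ∙ (u : E))ᗮ := span_le.2 fun v hv =>
      mem_orthogonal_singleton_iff_inner_left.2 (congrFun hu ⟨v, hv⟩)
    simpa using mem_orthogonal_singleton_iff_inner_left.1 (hKu u.2)
  obtain ⟨L, -, hL⟩ := f.exists_antilipschitzWith hker
  refine ⟨L, fun w δ hδ hw => ?_⟩
  calc ‖K.orthogonalProjectionOnto w‖ ≤ L * ‖f (K.orthogonalProjectionOnto w)‖ :=
        ZeroHomClass.bound_of_antilipschitz f hL _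
    _ ≤ L * δ := by
        gcongr
        refine (pi_norm_le_iff_of_nonneg hδ).2 fun v => ?_
        have hv := inner_orthogonalProjectionOnto_eq_of_mem_left (⟨v, subset_span v.2⟩ : K) w
        rw [K.coe_inner] at hv
        rw [Real.norm_eq_abs, hf, hv]
        exact hw v v.2

theorem exists_norm_orthogonalProjectionOnto_span_subset_le [FiniteDimensional ℝ E]
    (S : Finset E) :
    ∃ C : ℝ, 0 < C ∧ ∀ T ⊆ (S : Set E), ∀ (w : E) (ε : ℝ), 0 ≤ ε →
      (∀ v ∈ T, |⟪v, w⟫| ≤ ε * (‖v‖ * ‖w‖)) →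
      ‖(span ℝ T).orthogonalProjectionOnto w‖ ≤ C * ε * ‖w‖ := by
  choose C hC using fun T : Finset E => exists_norm_orthogonalProjectionOnto_span_le T
  obtain ⟨M, hM⟩ := (S.powerset.image C).exists_le
  set B := ∑ v ∈ S, ‖v‖
  have hB : ∀ v ∈ S, ‖v‖ ≤ B := fun v hv =>
    Finset.single_le_sum (f := (‖·‖)) (fun _ _ => norm_nonneg _) hv
  refine ⟨max M 1 * (B + 1), by positivity, fun T hT w ε hε hw => ?_⟩
  lift T to Finset E using S.finite_toSet.subset hT
  have hCT : C T ≤ max M 1 :=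
    (hM _ (Finset.mem_image_of_mem C (Finset.mem_powerset.2 (Finset.coe_subset.1 hT)))).trans
      (le_max_left M 1)
  have hTw : ∀ v ∈ T, |⟪v, w⟫| ≤ ε * B * ‖w‖ := fun v hv =>
    (hw v hv).trans <| by
      rw [← mul_assoc]
      gcongr
      exact hB v (hT hv)
  calc ‖(span ℝ (T : Set E)).orthogonalProjectionOnto w‖ ≤ C T * (ε * B * ‖w‖) :=
        hC T w _ (by positivity) hTw
    _ ≤ max M 1 * (ε * (B + 1) * ‖w‖) := by gcongr; linarith
    _ = max M 1 * (B + 1) * ε * ‖w‖ := by ring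

end Submodule

theorem abs_real_inner_le_of_div_le {E : Type*} [NormedAddCommGroup E] [InnerProductSpace ℝ E]
    {a b : E} {t : ℝ} (h : |⟪a, b⟫| / (‖a‖ * ‖b‖) ≤ t) :
    |⟪a, b⟫| ≤ t * (‖a‖ * ‖b‖) := by
  rcases (by positivity : 0 ≤ ‖a‖ * ‖b‖).eq_or_lt with h0 | hpos
  · rw [← h0, mul_zero]
    exact h0 ▸ abs_real_inner_le_norm a b
  · exact (div_le_iff₀ hpos).1 h

theorem setOf_swapCond_finite (k r : ℕ) : {x : Fin k → ℤ | SwapCond k r x}.Finite :=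
  (Set.finite_Icc (fun _ => -(2 * (r : ℤ) - 2)) fun _ => 2 * (r : ℤ) - 2).subset fun _ hx =>
    ⟨fun i => (abs_le.1 (hx.1 i)).1, fun i => (abs_le.1 (hx.1 i)).2⟩

theorem projection_onto_W_theta_span_small_general (k r d : ℕ)
    (s : Fin k → EuclideanSpace ℝ (Fin d)) :
    ∃ η : ℝ, 0 < η ∧
      ∀ w : EuclideanSpace ℝ (Fin d), w ≠ 0 →
        ∀ θ : ℝ, 0 < θ → θ < Real.pi / 2 →
          ‖(Submodule.orthogonalProjection
              (Submodule.span ℝ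
                {v : EuclideanSpace ℝ (Fin d) |
                  ∃ x, SwapCond k r x ∧ sinAngle s w x < Real.sin θ ∧ v = gMap s x})
              w : EuclideanSpace ℝ (Fin d))‖ ≤ η * ‖w‖ * Real.sin θ := by
  set G := ((setOf_swapCond_finite k r).image (gMap s)).toFinset
  obtain ⟨η, hη, hG⟩ := Submodule.exists_norm_orthogonalProjectionOnto_span_subset_le G
  refine ⟨η, hη, fun w _ θ hθ hθπ => ?_⟩
  have hsin : 0 < Real.sin θ := Real.sin_pos_of_pos_of_lt_pi hθ (by linarith [Real.pi_pos])
  have hWG : {v | ∃ x, SwapCond k r x ∧ sinAngle s w x < Real.sin θ ∧ v = gMap s x} ⊆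
      (G : Set (EuclideanSpace ℝ (Fin d))) := by
    rw [Set.Finite.coe_toFinset]
    rintro _ ⟨x, hx, -, rfl⟩
    exact ⟨x, hx, rfl⟩
  calc _ ≤ η * Real.sin θ * ‖w‖ :=
        hG _ hWG w _ hsin.le fun _ ⟨_, _, hθx, hv⟩ =>
          hv ▸ abs_real_inner_le_of_div_le hθx.le
    _ = η * ‖w‖ * Real.sin θ := by ring

theorem projection_onto_W_theta_span_small (k r d : ℕ) (hk : 2 ≤ k) (hr : 2 ≤ r)
    (s : Fin k → EuclideanSpace ℝ (Fin d)) (hs : ∀ i, ‖s i‖ = 1)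
    (hinj : Function.Injective s) :
    ∃ η : ℝ, 0 < η ∧
      ∀ w : EuclideanSpace ℝ (Fin d), w ≠ 0 →
        ∀ θ : ℝ, 0 < θ → θ < Real.pi / 2 →
          ‖(Submodule.orthogonalProjection
              (Submodule.span ℝ
                {v : EuclideanSpace ℝ (Fin d) |
                  ∃ x, SwapCond k r x ∧ sinAngle s w x < Real.sin θ ∧ v = gMap s x})
              w : EuclideanSpace ℝ (Fin d))‖ ≤ η * ‖w‖ * Real.sin θ :=
  projection_onto_W_theta_span_small_general k r d s
end

section
/- Let d, r ≥ 2, k = d+1, and let s_1, …, s_{d+1} ∈ R^d be the vertices of a regular simplex inscribed in the unit sphere (unit vectors with ⟨s_i, s_j⟩ = −1/d for i ≠ j). Then for every nonzero w ∈ R^d and every θ ∈ (0, π/2), writing U for the linear span of {g(x) : x ∈ W_θ} and π_U for the orthogonal projection of R^d onto U, one has ‖π_U(w)‖ ≤ (8dr)^{3d²} ‖w‖ sin θ; that is, in this setting one may take η = (8dr)^{3d²}. -/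
/-!
The Gram matrix of the vectors `g x` is `(1 + 1/d)` times an integer matrix, so a linearly
independent family `v₁, …, vₘ` among them has Gram determinant at least `1`, and Cramer's rule
bounds the coordinates of any unit vector of `U` in this family by `m! (4r)^{2m}`. Each `vⱼ` makes an
angle less than `θ` with `w^⊥`, so `|⟪vⱼ, w⟫| ≤ 4r ‖w‖ sin θ`. Pairing the unit vector
`π_U w / ‖π_U w‖` with `w` gives `‖π_U w‖`, hence `‖π_U w‖ ≤ m · m! (4r)^{2m} · 4r ‖w‖ sin θ`
with `m ≤ d`.
-/

attribute [local instance] Classical.propDecidable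

open scoped RealInnerProductSpace

open Matrix
open scoped Nat

theorem mul_factorial_mul_pow_le {m n : ℕ} (hmn : m ≤ n) {x : ℝ} (hx : 1 ≤ x) :
    (m : ℝ) * m ! * x ^ m ≤ n * n ! * x ^ n := by
  gcongr

namespace Matrix

variable {n : Type*} [Fintype n]

theorem gram_mulVec_apply {E : Type*} [NormedAddCommGroup E] [InnerProductSpace ℝ E]
    (v : n → E) (c : n → ℝ) (i : n) : (gram ℝ v *ᵥ c) i = ⟪v i, ∑ j, c j • v j⟫ := by
  simp [mulVec, dotProduct, gram_apply, inner_sum, real_inner_smul_right, mul_comm]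

variable [DecidableEq n]

theorem abs_le_of_mulVec_eq_of_one_le_abs_det {M : Matrix n n ℝ} (hM : 1 ≤ |M.det|)
    {c q : n → ℝ} (hc : M *ᵥ c = q) {B : ℝ} (hMB : ∀ i j, |M i j| ≤ B) (hqB : ∀ i, |q i| ≤ B)
    (j : n) : |c j| ≤ (Fintype.card n)! * B ^ Fintype.card n := by
  have cramer_rule : c j * M.det = (M.updateCol j q).det := by
    rw [← cramer_apply, ← hc, cramer_eq_adjugate_mulVec, mulVec_mulVec, adjugate_mul,
      smul_mulVec, one_mulVec, Pi.smul_apply, smul_eq_mul, mul_comm]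
  have hentry : ∀ i l, |M.updateCol j q i l| ≤ B := by
    intro i l
    rw [updateCol_apply]
    split_ifs
    exacts [hqB i, hMB i l]
  calc |c j| ≤ |c j| * |M.det| := le_mul_of_one_le_right (abs_nonneg _) hM
    _ = |(M.updateCol j q).det| := by rw [← abs_mul, cramer_rule]
    _ ≤ _ := by simpa [nsmul_eq_mul] using det_le (abv := AbsoluteValue.abs) hentry

theorem one_le_abs_det_of_eq_smul_intCast {M : Matrix n n ℝ} (hM : M.det ≠ 0) {t : ℝ}
    (ht : 1 ≤ t) {A : Matrix n n ℤ} (hMA : M = t • A.map (Int.cast : ℤ → ℝ)) :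
    1 ≤ |M.det| := by
  have hdet : M.det = t ^ Fintype.card n * (A.det : ℝ) := by
    rw [hMA, det_smul, Int.cast_det]
  have hA : A.det ≠ 0 := by
    rintro h
    simp [hdet, h] at hM
  rw [hdet, abs_mul, abs_pow, abs_of_pos (by linarith), ← Int.cast_abs]
  exact one_le_mul_of_one_le_of_one_le (one_le_pow₀ ht) (by exact_mod_cast Int.one_le_abs hA)

end Matrix

section InnerProductSpace

variable {E : Type*} [NormedAddCommGroup E] [InnerProductSpace ℝ E]

theorem LinearIndependent.abs_coeff_le_of_inner_eq_mul_int {n : Type*} [Fintype n]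
    [DecidableEq n] {v : n → E} (hv : LinearIndependent ℝ v) {t : ℝ} (ht : 1 ≤ t)
    (hint : ∀ i j, ∃ z : ℤ, ⟪v i, v j⟫ = t * z) {R : ℝ} (hR : 1 ≤ R) (hvR : ∀ i, ‖v i‖ ≤ R)
    {c : n → ℝ} (hc : ‖∑ i, c i • v i‖ ≤ 1) (j : n) :
    |c j| ≤ (Fintype.card n)! * (R ^ 2) ^ Fintype.card n := by
  choose A hA using hint
  have hgram : gram ℝ v = t • (Matrix.of A).map (Int.cast : ℤ → ℝ) := by
    ext i j
    simp [gram_apply, hA]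
  have hdet : 1 ≤ |(gram ℝ v).det| :=
    one_le_abs_det_of_eq_smul_intCast (posDef_gram_of_linearIndependent hv).det_pos.ne' ht hgram
  have hR0 : 0 ≤ R := by linarith
  refine abs_le_of_mulVec_eq_of_one_le_abs_det hdet (funext (gram_mulVec_apply v c)) ?_ ?_ j
  · intro i l
    calc |⟪v i, v l⟫| ≤ ‖v i‖ * ‖v l‖ := abs_real_inner_le_norm _ _
      _ ≤ R ^ 2 := by rw [sq]; exact mul_le_mul (hvR i) (hvR l) (norm_nonneg _) hR0
  · intro i
    calc |⟪v i, ∑ j, c j • v j⟫| ≤ ‖v i‖ * ‖∑ j, c j • v j‖ := abs_real_inner_le_norm _ _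
      _ ≤ R * 1 := mul_le_mul (hvR i) hc (norm_nonneg _) hR0
      _ ≤ R ^ 2 := by nlinarith

theorem Submodule.inner_starProjection_self_eq_norm_sq (K : Submodule ℝ E)
    [K.HasOrthogonalProjection] (w : E) :
    ⟪K.starProjection w, w⟫ = ‖K.starProjection w‖ ^ 2 := by
  have := K.starProjection_inner_eq_zero w _ (K.starProjection_apply_mem w)
  rw [inner_sub_left, real_inner_self_eq_norm_sq, real_inner_comm] at this
  linarith

theorem norm_starProjection_span_le [FiniteDimensional ℝ E] {T : Set E} {t : ℝ} (ht : 1 ≤ t)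
    (hint : ∀ v ∈ T, ∀ v' ∈ T, ∃ z : ℤ, ⟪v, v'⟫ = t * z) {R : ℝ} (hR : 1 ≤ R)
    (hTR : ∀ v ∈ T, ‖v‖ ≤ R) {w : E} {ε : ℝ} (hε : 0 ≤ ε) (hTw : ∀ v ∈ T, |⟪v, w⟫| ≤ ε) :
    ‖(Submodule.span ℝ T).starProjection w‖ ≤
      Module.finrank ℝ E * (Module.finrank ℝ E)! * (R ^ 2) ^ Module.finrank ℝ E * ε := by
  obtain ⟨b, hbT, hspan, hli⟩ := exists_linearIndependent ℝ T
  have : Fintype b := hli.set_finite_of_isNoetherian.fintype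
  set p := (Submodule.span ℝ T).starProjection w
  rcases eq_or_ne p 0 with hp | hp
  · rw [hp, norm_zero]
    positivity
  obtain ⟨c, hc⟩ : ∃ c : b → ℝ, ∑ i, c i • (i : E) = ‖p‖⁻¹ • p := by
    rw [← Submodule.mem_span_range_iff_exists_fun, Subtype.range_coe, hspan]
    exact Submodule.smul_mem _ _ (Submodule.starProjection_apply_mem _ w)
  have hcoeff := hli.abs_coeff_le_of_inner_eq_mul_int ht
    (fun i j => hint _ (hbT i.2) _ (hbT j.2)) hR (fun i => hTR _ (hbT i.2))
    (by rw [hc, norm_smul, norm_inv, norm_norm, inv_mul_cancel₀ (norm_ne_zero_iff.2 hp)])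
  have hpw : ⟪p, w⟫ = ‖p‖ ^ 2 := Submodule.inner_starProjection_self_eq_norm_sq _ w
  calc ‖p‖ = ⟪‖p‖⁻¹ • p, w⟫ := by
        rw [real_inner_smul_left, hpw]
        field_simp
    _ = ∑ i, c i * ⟪(i : E), w⟫ := by
        simp only [← hc, sum_inner, real_inner_smul_left]
    _ ≤ ∑ i, |c i| * ε := by
        refine Finset.sum_le_sum fun i _ => ?_
        exact (le_abs_self _).trans ((abs_mul _ _).trans_le
          (mul_le_mul_of_nonneg_left (hTw _ (hbT i.2)) (abs_nonneg _)))
    _ ≤ ∑ _i : b, (Fintype.card b)! * (R ^ 2) ^ Fintype.card b * ε := by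
        gcongr with i
        exact hcoeff i
    _ = Fintype.card b * (Fintype.card b)! * (R ^ 2) ^ Fintype.card b * ε := by
        rw [Finset.sum_const, Finset.card_univ, nsmul_eq_mul]
        ring
    _ ≤ _ := mul_le_mul_of_nonneg_right
        (mul_factorial_mul_pow_le hli.fintype_card_le_finrank (one_le_pow₀ hR)) hε

end InnerProductSpace

section Simplex

variable {k d : ℕ} {s : Fin k → EuclideanSpace ℝ (Fin d)}

theorem norm_gMap_le_of_swapCond (hs : ∀ i, ‖s i‖ = 1) {r : ℕ} {x : Fin k → ℤ}
    (hx : SwapCond k r x) : ‖gMap s x‖ ≤ 4 * r := by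
  have hsum : ((∑ i, |x i| : ℤ) : ℝ) ≤ 4 * r - 4 := by exact_mod_cast hx.2.2
  calc ‖gMap s x‖ ≤ ∑ i, ‖(x i : ℝ) • s i‖ := norm_sum_le _ _
    _ = ((∑ i, |x i| : ℤ) : ℝ) := by simp [norm_smul, hs]
    _ ≤ 4 * r := by linarith

theorem inner_gMap_gMap {a : ℝ} (hs : ∀ i, ‖s i‖ = 1) (hs' : ∀ i j, i ≠ j → ⟪s i, s j⟫ = -a)
    {x : Fin k → ℤ} (hx : ∑ i, x i = 0) (y : Fin k → ℤ) :
    ⟪gMap s x, gMap s y⟫ = (1 + a) * ∑ i, (x i : ℝ) * y i := by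
  have hss : ∀ i j, ⟪s i, s j⟫ = (1 + a) * (if i = j then 1 else 0) - a := by
    intro i j
    split_ifs with h
    · rw [h, real_inner_self_eq_norm_sq, hs]
      ring
    · rw [hs' i j h]
      ring
  have hsy : ∀ i, ⟪s i, gMap s y⟫ = (1 + a) * y i - a * ∑ j, (y j : ℝ) := by
    intro i
    simp [gMap, inner_sum, real_inner_smul_right, hss, mul_sub, Finset.sum_sub_distrib,
      Finset.mul_sum, mul_comm]
  have hx' : ∑ i, (x i : ℝ) = 0 := by exact_mod_cast hx
  calc ⟪gMap s x, gMap s y⟫ = ∑ i, (x i : ℝ) * ⟪s i, gMap s y⟫ := by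
        simp only [gMap, sum_inner, real_inner_smul_left]
    _ = (1 + a) * ∑ i, (x i : ℝ) * y i - (∑ i, (x i : ℝ)) * (a * ∑ j, (y j : ℝ)) := by
        rw [Finset.sum_mul, Finset.mul_sum, ← Finset.sum_sub_distrib]
        exact Finset.sum_congr rfl fun i _ => by rw [hsy]; ring
    _ = (1 + a) * ∑ i, (x i : ℝ) * y i := by rw [hx', zero_mul, sub_zero]

theorem abs_inner_gMap_le_of_sinAngle_lt {w : EuclideanSpace ℝ (Fin d)} {x : Fin k → ℤ} {σ : ℝ}
    (h : sinAngle s w x < σ) : |⟪gMap s x, w⟫| ≤ σ * (‖gMap s x‖ * ‖w‖) := by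
  rcases (mul_nonneg (norm_nonneg (gMap s x)) (norm_nonneg w)).eq_or_lt with h0 | hpos
  · have := abs_real_inner_le_norm (gMap s x) w
    rw [← h0] at this ⊢
    linarith [abs_nonneg ⟪gMap s x, w⟫]
  · exact ((div_lt_iff₀ hpos).1 h).le

end Simplex

theorem simplex_constant_le {d r : ℕ} (hd : 2 ≤ d) (hr : 1 ≤ r) :
    (d : ℝ) * d ! * ((4 * r : ℝ) ^ 2) ^ d * (4 * r) ≤ (8 * d * r) ^ (3 * d ^ 2) := by
  set P : ℝ := 8 * d * r
  have hd1 : (1 : ℝ) ≤ d := by exact_mod_cast hd.trans' one_le_two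
  have hr1 : (1 : ℝ) ≤ r := by exact_mod_cast hr
  have hdP : (d : ℝ) ≤ P := by nlinarith
  have hrP : 4 * (r : ℝ) ≤ P := by nlinarith
  have hfact : (d ! : ℝ) ≤ P ^ d :=
    calc (d ! : ℝ) ≤ (d : ℝ) ^ d := by exact_mod_cast Nat.factorial_le_pow d
      _ ≤ P ^ d := by gcongr
  calc (d : ℝ) * d ! * ((4 * r : ℝ) ^ 2) ^ d * (4 * r) ≤ P * P ^ d * (P ^ 2) ^ d * P := by
        gcongr
    _ = P ^ (3 * d + 2) := by rw [← pow_mul]; ring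
    _ ≤ P ^ (3 * d ^ 2) := pow_le_pow_right₀ (by nlinarith) (by nlinarith)

theorem simplex_eta_explicit (d r : ℕ) (hd : 2 ≤ d) (hr : 2 ≤ r)
    (s : Fin (d + 1) → EuclideanSpace ℝ (Fin d))
    (hs : ∀ i, ‖s i‖ = 1)
    (hs' : ∀ i j, i ≠ j → ⟪s i, s j⟫ = -1 / d) :
    ∀ w : EuclideanSpace ℝ (Fin d), w ≠ 0 →
      ∀ θ : ℝ, 0 < θ → θ < Real.pi / 2 →
        ‖(Submodule.orthogonalProjection
            (Submodule.span ℝ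
              {v : EuclideanSpace ℝ (Fin d) |
                ∃ x, SwapCond (d + 1) r x ∧ sinAngle s w x < Real.sin θ ∧ v = gMap s x})
            w : EuclideanSpace ℝ (Fin d))‖ ≤
          (8 * (d : ℝ) * r) ^ (3 * d ^ 2) * ‖w‖ * Real.sin θ := by
  intro w _ θ hθ hθ'
  set T : Set (EuclideanSpace ℝ (Fin d)) :=
    {v | ∃ x, SwapCond (d + 1) r x ∧ sinAngle s w x < Real.sin θ ∧ v = gMap s x}
  have hsin : 0 ≤ Real.sin θ :=
    Real.sin_nonneg_of_nonneg_of_le_pi hθ.le (by linarith [Real.pi_pos])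
  have hr1 : (1 : ℝ) ≤ 4 * r := by
    have : (1 : ℝ) ≤ r := by exact_mod_cast hr.trans' one_le_two
    linarith
  have hTint : ∀ v ∈ T, ∀ v' ∈ T, ∃ z : ℤ, ⟪v, v'⟫ = (1 + 1 / d) * z := by
    have hs'' : ∀ i j, i ≠ j → ⟪s i, s j⟫ = -(1 / d) := fun i j h => by rw [hs' i j h, neg_div]
    rintro _ ⟨x, hx, -, rfl⟩ _ ⟨y, -, -, rfl⟩
    exact ⟨∑ i, x i * y i, by rw [inner_gMap_gMap hs hs'' hx.2.1]; push_cast; rfl⟩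
  have hTnorm : ∀ v ∈ T, ‖v‖ ≤ 4 * r := by
    rintro _ ⟨x, hx, -, rfl⟩
    exact norm_gMap_le_of_swapCond hs hx
  have hTinner : ∀ v ∈ T, |⟪v, w⟫| ≤ 4 * r * ‖w‖ * Real.sin θ := by
    rintro _ ⟨x, hx, hθx, rfl⟩
    calc |⟪gMap s x, w⟫| ≤ Real.sin θ * (‖gMap s x‖ * ‖w‖) := abs_inner_gMap_le_of_sinAngle_lt hθx
      _ ≤ Real.sin θ * (4 * r * ‖w‖) := by gcongr; exact norm_gMap_le_of_swapCond hs hx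
      _ = 4 * r * ‖w‖ * Real.sin θ := by ring
  calc ‖(Submodule.span ℝ T).starProjection w‖
      ≤ d * d ! * ((4 * r) ^ 2) ^ d * (4 * r * ‖w‖ * Real.sin θ) := by
        simpa only [finrank_euclideanSpace_fin] using norm_starProjection_span_le
          (le_add_of_nonneg_right (by positivity)) hTint hr1 hTnorm (by positivity) hTinner
    _ ≤ (8 * (d : ℝ) * r) ^ (3 * d ^ 2) * ‖w‖ * Real.sin θ := by
        rw [← mul_assoc, ← mul_assoc]
        gcongr
        exact simplex_constant_le hd (one_le_two.trans hr)
end
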